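/- Generic step-down bound for k-FWER: in a step-down multiple testing procedure with test statistics T_j, j ∈ [p], and monotone critical values (c_K increasing in K), the k-FWER is bounded by the probability that the k-th largest test statistic among the true nulls exceeds the critical value computed from the set of true nulls: k-FWER ≤ P( k-max(T_j : j ∈ I) > c_I ), where I is the index set of true null hypotheses. -/

import Mathlib

/-!
Let `A s` be the active set after `s` steps and let `s` be the first step after which at least
`k` true nulls have been rejected. Before that step fewer than `k` true nulls were rejected, so
`I ⊆ A s ∪ S` with `#S ≤ k - 1`, and monotonicity of `c` gives `c I ≤ augCrit c k (A s)`.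
The active sets shrink, hence so do the critical values, and every true null rejected by step
`s + 1` exceeded a critical value that is at least `augCrit c k (A s)`. Thus at least `k`
true-null statistics exceed `c I`, which is the event on the right.
-/


open MeasureTheory Finset

/-- The `k`-th largest value among the coordinates `x j`, `j ∈ K`, of a vector `x ∈ ℝ^p`. -/
noncomputable def kthMaxOn {p : ℕ} (K : Finset (Fin p)) (k : ℕ) (x : Fin p → ℝ) : ℝ :=
  sSup {t : ℝ | k ≤ (K.filter fun j => t ≤ x j).card}

/-- The step-down critical value used at active set `K` for `k`-FWER control
(Romano–Wolf Algorithm 2.1): the largest of the critical values `c (K ∪ S)` over all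
augmentations `S` of `K` by at most `k - 1` previously rejected indices. -/
noncomputable def augCrit {p : ℕ} (c : Finset (Fin p) → ℝ) (k : ℕ)
    (K : Finset (Fin p)) : ℝ :=
  sSup {r : ℝ | ∃ S : Finset (Fin p), S ⊆ Finset.univ \ K ∧ S.card ≤ k - 1 ∧ r = c (K ∪ S)}

/-- The active (not-yet-rejected) set of hypotheses of the step-down procedure after `s`
steps: start from all `p` hypotheses, and at each step reject (remove) those whose test
statistic exceeds the current critical value. -/
noncomputable def stepDownActive {p : ℕ} (T : Fin p → ℝ) (c : Finset (Fin p) → ℝ)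
    (k : ℕ) : ℕ → Finset (Fin p)
  | 0 => Finset.univ
  | s + 1 => (stepDownActive T c k s).filter
      (fun j => T j ≤ augCrit c k (stepDownActive T c k s))

section KthMax

variable {p : ℕ} {I J : Finset (Fin p)} {k : ℕ} {x : Fin p → ℝ}

lemma bddAbove_kthMaxOn_set (hk : 1 ≤ k) :
    BddAbove {t : ℝ | k ≤ (I.filter fun j => t ≤ x j).card} := by
  obtain ⟨M, hM⟩ := (Set.finite_range x).bddAbove
  refine ⟨M, fun t ht => ?_⟩
  obtain ⟨j, hj⟩ := Finset.card_pos.mp (lt_of_lt_of_le hk ht)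
  exact (Finset.mem_filter.mp hj).2.trans (hM ⟨j, rfl⟩)

lemma le_kthMaxOn {t : ℝ} (hk : 1 ≤ k) (ht : k ≤ (I.filter fun j => t ≤ x j).card) :
    t ≤ kthMaxOn I k x :=
  le_csSup (bddAbove_kthMaxOn_set hk) ht

lemma lt_kthMaxOn_of_subset {a : ℝ} (hk : 1 ≤ k) (hJI : J ⊆ I) (hJ : k ≤ J.card)
    (hlt : ∀ j ∈ J, a < x j) : a < kthMaxOn I k x := by
  obtain ⟨j₀, hj₀, hmin⟩ := J.exists_min_image x (Finset.card_pos.mp (lt_of_lt_of_le hk hJ))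
  refine (hlt j₀ hj₀).trans_le (le_kthMaxOn hk (hJ.trans (Finset.card_le_card ?_)))
  exact fun j hj => Finset.mem_filter.mpr ⟨hJI hj, hmin j hj⟩

end KthMax

section AugCrit

variable {p : ℕ} {c : Finset (Fin p) → ℝ} {k : ℕ}

lemma le_augCrit {K S : Finset (Fin p)} (hS : S ⊆ Finset.univ \ K) (hcard : S.card ≤ k - 1) :
    c (K ∪ S) ≤ augCrit c k K :=
  le_csSup
    ((Set.finite_range c).subset (by rintro r ⟨S, _, _, rfl⟩; exact ⟨_, rfl⟩)).bddAbove
    ⟨S, hS, hcard, rfl⟩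

lemma le_augCrit_of_card_sdiff_le (hmono : Monotone c) {K L : Finset (Fin p)}
    (hcard : (L \ K).card ≤ k - 1) : c L ≤ augCrit c k K := by
  have hL : L ⊆ K ∪ (L \ K) := by
    rw [Finset.union_sdiff_self_eq_union]
    exact Finset.subset_union_right
  exact (hmono hL).trans (le_augCrit (Finset.sdiff_subset_sdiff (Finset.subset_univ _) le_rfl)
    hcard)

lemma augCrit_mono (hmono : Monotone c) : Monotone (augCrit c k) := by
  intro K K' hKK'
  refine csSup_le ⟨c (K ∪ ∅), ∅, Finset.empty_subset _, by simp, rfl⟩ ?_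
  rintro r ⟨S, -, hcard, rfl⟩
  refine le_augCrit_of_card_sdiff_le hmono ((Finset.card_le_card ?_).trans hcard)
  intro j hj
  obtain ⟨hj, hjK'⟩ := Finset.mem_sdiff.mp hj
  exact (Finset.mem_union.mp hj).resolve_left fun hjK => hjK' (hKK' hjK)

end AugCrit

section StepDown

variable {p : ℕ} {x : Fin p → ℝ} {c : Finset (Fin p) → ℝ} {k : ℕ}

lemma stepDownActive_antitone : Antitone (stepDownActive x c k) :=
  antitone_nat_of_succ_le fun _ => Finset.filter_subset _ _

lemma augCrit_lt_of_notMem_stepDownActive (hmono : Monotone c) {j : Fin p} :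
    ∀ {s : ℕ}, j ∉ stepDownActive x c k (s + 1) → augCrit c k (stepDownActive x c k s) < x j
  | s, hj => by
    rw [stepDownActive, Finset.mem_filter, not_and_or, not_le] at hj
    rcases hj with hjs | hlt
    · cases s with
      | zero => exact absurd (Finset.mem_univ j) hjs
      | succ r =>
        exact (augCrit_mono hmono (stepDownActive_antitone (Nat.le_succ r))).trans_lt
          (augCrit_lt_of_notMem_stepDownActive hmono hjs)
    · exact hlt

lemma lt_kthMaxOn_of_le_card_sdiff_stepDownActive (hmono : Monotone c) (hk : 1 ≤ k)
    (I : Finset (Fin p)) {s : ℕ} (hs : k ≤ (I \ stepDownActive x c k s).card) :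
    c I < kthMaxOn I k x := by
  classical
  have hex : ∃ s, k ≤ (I \ stepDownActive x c k s).card := ⟨s, hs⟩
  obtain ⟨r, hr⟩ : ∃ r, Nat.find hex = r + 1 := by
    refine Nat.exists_eq_add_one_of_ne_zero fun h0 => ?_
    have hzero := h0 ▸ Nat.find_spec hex
    rw [stepDownActive, Finset.sdiff_eq_empty_iff_subset.mpr (Finset.subset_univ I),
      Finset.card_empty] at hzero
    omega
  have hbefore : (I \ stepDownActive x c k r).card ≤ k - 1 := by
    have := Nat.find_min hex (show r < Nat.find hex by omega)
    omega
  have hafter : k ≤ (I \ stepDownActive x c k (r + 1)).card := hr ▸ Nat.find_spec hex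
  refine lt_kthMaxOn_of_subset hk Finset.sdiff_subset hafter fun j hj => ?_
  exact (le_augCrit_of_card_sdiff_le hmono hbefore).trans_lt
    (augCrit_lt_of_notMem_stepDownActive hmono (Finset.mem_sdiff.mp hj).2)

end StepDown

theorem stepDown_kFWER_bound_general {Ω : Type*} [MeasurableSpace Ω]
    (μ : Measure Ω)
    (p : ℕ) (T : Ω → Fin p → ℝ)
    (c : Finset (Fin p) → ℝ)
    (hmono : ∀ K K' : Finset (Fin p), K ⊆ K' → c K ≤ c K')
    (I : Finset (Fin p)) (k : ℕ) (hk1 : 1 ≤ k) :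
    μ {ω | k ≤ ((Finset.univ \ stepDownActive (T ω) c k p) ∩ I).card}
      ≤ μ {ω | c I < kthMaxOn I k (T ω)} := by
  refine measure_mono fun ω (hω : k ≤ _) => ?_
  rw [← Finset.compl_eq_univ_sdiff, Finset.inter_comm, ← Finset.sdiff_eq_inter_compl] at hω
  exact lt_kthMaxOn_of_le_card_sdiff_stepDownActive hmono hk1 I hω

/-- Generic step-down bound for the `k`-FWER: for the step-down procedure with test
statistics `T j` and monotone critical values `c K` (increasing in `K`), the probability
of rejecting `k` or more true nulls (indices in `I`) is bounded by the probability that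
the `k`-th largest statistic among the true nulls exceeds the critical value `c I`
computed from the set of true nulls. After `p` steps the procedure has terminated, so
the rejected set is `univ \ stepDownActive (T ω) c k p`. -/
theorem stepDown_kFWER_bound {Ω : Type*} [MeasurableSpace Ω]
    (μ : Measure Ω) [IsProbabilityMeasure μ]
    (p : ℕ) (T : Ω → Fin p → ℝ) (hT : Measurable T)
    (c : Finset (Fin p) → ℝ)
    (hmono : ∀ K K' : Finset (Fin p), K ⊆ K' → c K ≤ c K')
    (I : Finset (Fin p)) (k : ℕ) (hk1 : 1 ≤ k) (hkI : k ≤ I.card) :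
    μ {ω | k ≤ ((Finset.univ \ stepDownActive (T ω) c k p) ∩ I).card}
      ≤ μ {ω | c I < kthMaxOn I k (T ω)} :=
  stepDown_kFWER_bound_general μ p T c hmono I k hk1
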